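/- arXiv:math/0203079 — 2 statements merged into one kernel-verified Lean document; each statement's English description precedes it below -/
import Mathlib

section
/- Let G ⊂ GL(V) and G' ⊂ GL(V') be finite subgroups of the general linear groups of finite-dimensional complex vector spaces, and let F : V → V' be a bijective holomorphic map whose inverse is holomorphic, which maps each G-orbit bijectively onto a G'-orbit. Then there exists a unique group isomorphism a : G → G' such that F ∘ g = a(g) ∘ F for every g ∈ G. -/
open Set

/-- A holomorphic map vanishing on a nonempty open set vanishes everywhere
(identity theorem along complex lines). -/
lemma aux_eq_zero_of_eqOn_open {W W' : Type*}
    [NormedAddCommGroup W] [NormedSpace ℂ W]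
    [NormedAddCommGroup W'] [NormedSpace ℂ W'] [CompleteSpace W']
    {ψ : W → W'} (hψ : Differentiable ℂ ψ) {U : Set W} (hU : IsOpen U)
    {x₀ : W} (hx₀ : x₀ ∈ U) (h0 : ∀ x ∈ U, ψ x = 0) (w : W) : ψ w = 0 := by
  set L : ℂ → W := fun z => x₀ + z • (w - x₀) with hL
  have hLd : Differentiable ℂ L := by
    apply differentiable_const _ |>.add
    exact (differentiable_id).smul_const _
  have hf : Differentiable ℂ (ψ ∘ L) := hψ.comp hLd
  have hA : AnalyticOnNhd ℂ (ψ ∘ L) univ :=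
    hf.differentiableOn.analyticOnNhd isOpen_univ
  have hev : (ψ ∘ L) =ᶠ[nhds (0 : ℂ)] 0 := by
    have hL0 : L 0 = x₀ := by simp [hL]
    have : ∀ᶠ z in nhds (0 : ℂ), L z ∈ U := by
      have := hLd.continuous.continuousAt (x := (0:ℂ))
      exact this.preimage_mem_nhds (hL0 ▸ hU.mem_nhds hx₀)
    filter_upwards [this] with z hz
    exact h0 _ hz
  have := hA.eqOn_zero_of_preconnected_of_eventuallyEq_zero
    isPreconnected_univ (mem_univ (0 : ℂ)) hev (mem_univ (1 : ℂ))
  simpa [hL] using this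

/-- A holomorphic self-map agreeing at every point with some element of a finite
linear group equals one fixed element globally. -/
lemma aux_key {W : Type*} [NormedAddCommGroup W] [NormedSpace ℂ W] [FiniteDimensional ℂ W]
    (H : Subgroup (W ≃ₗ[ℂ] W)) [Finite H] {φ : W → W} (hφ : Differentiable ℂ φ)
    (h : ∀ v, ∃ g : H, φ v = (g : W ≃ₗ[ℂ] W) v) :
    ∃ g : H, ∀ v, φ v = (g : W ≃ₗ[ℂ] W) v := by
  have : Nonempty W := ⟨0⟩
  have hcont : ∀ g : H, Continuous fun v => (g : W ≃ₗ[ℂ] W) v := fun g =>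
    LinearMap.continuous_of_finiteDimensional ((g : W ≃ₗ[ℂ] W) : W →ₗ[ℂ] W)
  have hdiff : ∀ g : H, Differentiable ℂ fun v => (g : W ≃ₗ[ℂ] W) v := fun g =>
    (LinearMap.toContinuousLinearMap ((g : W ≃ₗ[ℂ] W) : W →ₗ[ℂ] W)).differentiable
  have hcover : ⋃ g : H, {v | φ v = (g : W ≃ₗ[ℂ] W) v} = univ := by
    ext v; simp only [mem_iUnion, mem_univ, iff_true, Set.mem_setOf_eq]
    exact h v
  obtain ⟨g, x₀, hx₀⟩ := nonempty_interior_of_iUnion_of_closed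
    (fun g : H => isClosed_eq hφ.continuous (hcont g)) hcover
  refine ⟨g, fun w => ?_⟩
  have := aux_eq_zero_of_eqOn_open (ψ := fun v => φ v - (g : W ≃ₗ[ℂ] W) v)
    (hφ.sub (hdiff g)) isOpen_interior hx₀
    (fun x hx => sub_eq_zero.mpr (show x ∈ {v | φ v = (g : W ≃ₗ[ℂ] W) v} from interior_subset hx)) w
  exact sub_eq_zero.mp this

/-- If `F : V → V'` is a biholomorphism between finite-dimensional
complex vector spaces mapping each orbit of a finite group `G ⊆ GL(V)` (bijectively)
onto an orbit of a finite group `G' ⊆ GL(V')`, then there is a unique group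
isomorphism `a : G → G'` with `F ∘ g = a g ∘ F` for all `g ∈ G`. -/
theorem stmt6 {V V' : Type*}
    [NormedAddCommGroup V] [NormedSpace ℂ V] [FiniteDimensional ℂ V]
    [NormedAddCommGroup V'] [NormedSpace ℂ V'] [FiniteDimensional ℂ V']
    (G : Subgroup (V ≃ₗ[ℂ] V)) (G' : Subgroup (V' ≃ₗ[ℂ] V'))
    [Finite G] [Finite G']
    (F : V ≃ V') (hF : Differentiable ℂ (F : V → V'))
    (hFinv : Differentiable ℂ (F.symm : V' → V))
    (horb : ∀ v : V, ∃ v' : V',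
      F '' (Set.range fun g : G => (g : V ≃ₗ[ℂ] V) v)
        = Set.range fun g' : G' => (g' : V' ≃ₗ[ℂ] V') v') :
    ∃! a : G ≃* G', ∀ (g : G) (v : V),
      F ((g : V ≃ₗ[ℂ] V) v) = ((a g : V' ≃ₗ[ℂ] V')) (F v) := by
  have hdiffG : ∀ g : G, Differentiable ℂ fun v => (g : V ≃ₗ[ℂ] V) v := fun g =>
    (LinearMap.toContinuousLinearMap ((g : V ≃ₗ[ℂ] V) : V →ₗ[ℂ] V)).differentiable
  have hdiffG' : ∀ g : G', Differentiable ℂ fun v => (g : V' ≃ₗ[ℂ] V') v := fun g =>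
    (LinearMap.toContinuousLinearMap ((g : V' ≃ₗ[ℂ] V') : V' →ₗ[ℂ] V')).differentiable
  -- Orbits map to the orbit of the image point
  have horb' : ∀ v : V,
      F '' (Set.range fun g : G => (g : V ≃ₗ[ℂ] V) v)
        = Set.range fun g' : G' => (g' : V' ≃ₗ[ℂ] V') (F v) := by
    intro v
    obtain ⟨v', hv'⟩ := horb v
    have hFv : F v ∈ Set.range fun g' : G' => (g' : V' ≃ₗ[ℂ] V') v' := by
      rw [← hv']
      exact ⟨(1 : G) • v, ⟨1, rfl⟩, by simp⟩
    obtain ⟨g₀, hg₀⟩ := hFv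
    rw [hv']
    ext w
    constructor
    · rintro ⟨g'', rfl⟩
      refine ⟨g'' * g₀⁻¹, ?_⟩
      show (g'' : V' ≃ₗ[ℂ] V') ((g₀ : V' ≃ₗ[ℂ] V').symm (F v)) = (g'' : V' ≃ₗ[ℂ] V') v'
      simp only [← hg₀]
      rw [LinearEquiv.symm_apply_apply]
    · rintro ⟨g'', rfl⟩
      refine ⟨g'' * g₀, ?_⟩
      show (g'' : V' ≃ₗ[ℂ] V') ((g₀ : V' ≃ₗ[ℂ] V') v') = (g'' : V' ≃ₗ[ℂ] V') (F v)
      simp only [hg₀]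
  -- existence of a conjugating element for each g
  have ha : ∀ g : G, ∃ h : G', ∀ v : V,
      F ((g : V ≃ₗ[ℂ] V) v) = (h : V' ≃ₗ[ℂ] V') (F v) := by
    intro g
    have hφ : Differentiable ℂ fun v' : V' => F ((g : V ≃ₗ[ℂ] V) (F.symm v')) :=
      hF.comp ((hdiffG g).comp hFinv)
    have hpt : ∀ v', ∃ h : G',
        F ((g : V ≃ₗ[ℂ] V) (F.symm v')) = (h : V' ≃ₗ[ℂ] V') v' := by
      intro v'
      have hm : F ((g : V ≃ₗ[ℂ] V) (F.symm v'))
          ∈ F '' (Set.range fun g : G => (g : V ≃ₗ[ℂ] V) (F.symm v')) :=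
        ⟨(g : V ≃ₗ[ℂ] V) (F.symm v'), ⟨g, rfl⟩, rfl⟩
      rw [horb' (F.symm v')] at hm
      obtain ⟨h, hh⟩ := hm
      exact ⟨h, by rw [← hh, F.apply_symm_apply]⟩
    obtain ⟨h, hh⟩ := aux_key G' hφ hpt
    exact ⟨h, fun v => by simpa [F.symm_apply_apply] using hh (F v)⟩
  -- existence of a conjugating element in the reverse direction
  have hb : ∀ h : G', ∃ g : G, ∀ v : V,
      F.symm ((h : V' ≃ₗ[ℂ] V') (F v)) = (g : V ≃ₗ[ℂ] V) v := by
    intro h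
    have hφ : Differentiable ℂ fun v : V => F.symm ((h : V' ≃ₗ[ℂ] V') (F v)) :=
      hFinv.comp ((hdiffG' h).comp hF)
    have hpt : ∀ v, ∃ g : G,
        F.symm ((h : V' ≃ₗ[ℂ] V') (F v)) = (g : V ≃ₗ[ℂ] V) v := by
      intro v
      have hm : (h : V' ≃ₗ[ℂ] V') (F v)
          ∈ F '' (Set.range fun g : G => (g : V ≃ₗ[ℂ] V) v) := by
        rw [horb' v]; exact ⟨h, rfl⟩
      obtain ⟨u, ⟨g, rfl⟩, hu⟩ := hm
      exact ⟨g, by rw [← hu, F.symm_apply_apply]⟩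
    exact aux_key G hφ hpt
  classical
  set a0 : G → G' := fun g => (ha g).choose with ha0
  have ha0spec : ∀ (g : G) (v : V),
      F ((g : V ≃ₗ[ℂ] V) v) = (a0 g : V' ≃ₗ[ℂ] V') (F v) := fun g => (ha g).choose_spec
  set b0 : G' → G := fun h => (hb h).choose with hb0
  have hb0spec : ∀ (h : G') (v : V),
      F.symm ((h : V' ≃ₗ[ℂ] V') (F v)) = (b0 h : V ≃ₗ[ℂ] V) v := fun h => (hb h).choose_spec
  have extG : ∀ {g₁ g₂ : G}, (∀ v, (g₁ : V ≃ₗ[ℂ] V) v = (g₂ : V ≃ₗ[ℂ] V) v) → g₁ = g₂ :=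
    fun hp => Subtype.ext (LinearEquiv.toLinearMap_injective (LinearMap.ext hp))
  have extG' : ∀ {h₁ h₂ : G'}, (∀ v, (h₁ : V' ≃ₗ[ℂ] V') v = (h₂ : V' ≃ₗ[ℂ] V') v) → h₁ = h₂ :=
    fun hp => Subtype.ext (LinearEquiv.toLinearMap_injective (LinearMap.ext hp))
  have hleft : ∀ g : G, b0 (a0 g) = g := by
    intro g
    refine extG fun v => ?_
    rw [← hb0spec (a0 g) v, ← ha0spec g v, F.symm_apply_apply]
  have hright : ∀ h : G', a0 (b0 h) = h := by
    intro h
    refine extG' fun v' => ?_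
    have := ha0spec (b0 h) (F.symm v')
    rw [← hb0spec h (F.symm v'), F.apply_symm_apply, F.apply_symm_apply] at this
    rw [← this]
  have hmul : ∀ g₁ g₂ : G, a0 (g₁ * g₂) = a0 g₁ * a0 g₂ := by
    intro g₁ g₂
    refine extG' fun w => ?_
    have hw : w = F (F.symm w) := (F.apply_symm_apply w).symm
    rw [hw]
    set v := F.symm w
    have h1 : ((g₁ * g₂ : G) : V ≃ₗ[ℂ] V) v = (g₁ : V ≃ₗ[ℂ] V) ((g₂ : V ≃ₗ[ℂ] V) v) := rfl
    have h2 : ((a0 g₁ * a0 g₂ : G') : V' ≃ₗ[ℂ] V') (F v)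
        = (a0 g₁ : V' ≃ₗ[ℂ] V') ((a0 g₂ : V' ≃ₗ[ℂ] V') (F v)) := rfl
    rw [h2, ← ha0spec (g₁ * g₂) v, h1, ← ha0spec g₂ v, ha0spec g₁]
  refine ⟨{ toFun := a0, invFun := b0, left_inv := hleft, right_inv := hright,
            map_mul' := hmul }, fun g v => ha0spec g v, ?_⟩
  intro a' ha'
  refine MulEquiv.ext fun g => extG' fun w => ?_
  have hw : w = F (F.symm w) := (F.apply_symm_apply w).symm
  rw [hw, ← ha' g (F.symm w), ha0spec g (F.symm w)]
  rfl
end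

section
/- Let G be a finite subgroup of GL(V) for a finite-dimensional complex vector space V, and let σ : V → ℂ^m be given by a generating system σ¹,…,σ^m of the invariant ring ℂ[V]^G. Then σ is a proper map: preimages of compact sets are compact. -/
open MvPolynomial

private lemma eval_smul_of_isHomogeneous {n N : ℕ} {p : MvPolynomial (Fin n) ℂ}
    (hp : p.IsHomogeneous N) (c : ℂ) (x : Fin n → ℂ) :
    eval (c • x) p = c ^ N * eval x p := by
  rw [eval_eq, eval_eq, Finset.mul_sum]
  refine Finset.sum_congr rfl fun dd hd => ?_
  have hdeg : (∑ i ∈ dd.support, dd i) = N := by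
    have := hp (mem_support_iff.mp hd)
    simpa [Finsupp.weight_apply, Finsupp.sum] using this
  calc p.coeff dd * ∏ i ∈ dd.support, (c • x) i ^ dd i
      = p.coeff dd * ∏ i ∈ dd.support, (c ^ dd i * x i ^ dd i) := by
        simp [mul_pow]
    _ = c ^ N * (p.coeff dd * ∏ i ∈ dd.support, x i ^ dd i) := by
        rw [Finset.prod_mul_distrib, Finset.prod_pow_eq_pow_sum, hdeg]; ring

private lemma key_no_common_zero {n m : ℕ}
    (G : Subgroup ((Fin n → ℂ) ≃ₗ[ℂ] (Fin n → ℂ))) [Finite G]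
    (P : Fin m → MvPolynomial (Fin n) ℂ) (d : Fin m → ℕ)
    (hhom : ∀ i, (P i).IsHomogeneous (d i))
    (hgen : ∀ f : MvPolynomial (Fin n) ℂ,
      (∀ (g : G) (v : Fin n → ℂ),
        aeval (((g : (Fin n → ℂ) ≃ₗ[ℂ] (Fin n → ℂ))) v) f = aeval v f) →
      f ∈ Algebra.adjoin ℂ (Set.range P))
    (u : Fin n → ℂ) (hu : u ≠ 0)
    (hvan : ∀ i, 1 ≤ d i → eval u (P i) = 0) : False := by
  classical
  have : Fintype G := Fintype.ofFinite G
  have haeval : ∀ (v : Fin n → ℂ) (p : MvPolynomial (Fin n) ℂ), aeval v p = eval v p := by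
    intro v p
    rw [← coe_aeval_eq_eval]; rfl
  -- each g u is nonzero
  have hgu : ∀ g : G, ((g : (Fin n → ℂ) ≃ₗ[ℂ] (Fin n → ℂ))) u ≠ 0 := fun g h =>
    hu (by simpa using (LinearEquiv.map_eq_zero_iff _).mp h)
  -- choose a linear form nonvanishing on the orbit of u
  obtain ⟨c, hc⟩ : ∃ c : Fin n → ℂ,
      ∀ g : G, (∑ k, ((g : (Fin n → ℂ) ≃ₗ[ℂ] (Fin n → ℂ))) u k * c k) ≠ 0 := by
    by_contra h
    push_neg at h
    set pbig : MvPolynomial (Fin n) ℂ :=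
      ∏ g : G, (∑ k, C (((g : (Fin n → ℂ) ≃ₗ[ℂ] (Fin n → ℂ))) u k) * X k) with hpbig
    have hzero : pbig = 0 := by
      apply MvPolynomial.funext
      intro x
      obtain ⟨g, hg⟩ := h x
      rw [map_zero, hpbig]
      rw [map_prod]
      refine Finset.prod_eq_zero (Finset.mem_univ g) ?_
      simpa using hg
    obtain ⟨g, -, hgz⟩ := Finset.prod_eq_zero_iff.mp hzero
    obtain ⟨k, hk⟩ : ∃ k, ((g : (Fin n → ℂ) ≃ₗ[ℂ] (Fin n → ℂ))) u k ≠ 0 := by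
      by_contra hk; push_neg at hk; exact hgu g (funext hk)
    apply hk
    have := congrArg (eval (Pi.single k 1 : Fin n → ℂ)) hgz
    simpa [Pi.single_apply, mul_ite, Finset.sum_ite_eq'] using this
  -- the linear polynomials L g with eval v (L g) = ∑ k, (g v) k * c k
  set E := (Fin n → ℂ) ≃ₗ[ℂ] (Fin n → ℂ)
  set L : G → MvPolynomial (Fin n) ℂ :=
    fun g => ∑ j, C (∑ k, ((g : E)) (Pi.single j 1) k * c k) * X j with hL
  have hevalL : ∀ (g : G) (v : Fin n → ℂ),
      eval v (L g) = ∑ k, ((g : E)) v k * c k := by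
    intro g v
    have hgv : ((g : E)) v = ∑ j, v j • ((g : E)) (Pi.single j 1) := by
      have hv : v = ∑ j, v j • (Pi.single j 1 : Fin n → ℂ) := by
        funext t
        simp [Pi.single_apply, mul_ite, Finset.sum_ite_eq']
      conv_lhs => rw [hv, map_sum]
      simp [map_smul]
    rw [hL]
    simp only [map_sum, map_mul, eval_C, eval_X, hgv]
    simp only [Finset.sum_apply, Pi.smul_apply, smul_eq_mul, Finset.sum_mul, Finset.mul_sum]
    conv_rhs => rw [Finset.sum_comm]
    exact Finset.sum_congr rfl fun j _ => Finset.sum_congr rfl fun k _ => by ring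
  set q : MvPolynomial (Fin n) ℂ := ∏ g : G, L g with hq
  have hevalq : ∀ v : Fin n → ℂ,
      eval v q = ∏ g : G, ∑ k, ((g : E)) v k * c k := by
    intro v
    rw [hq, map_prod]
    exact Finset.prod_congr rfl fun g _ => hevalL g v
  -- q is invariant
  have hqinv : ∀ (h : G) (v : Fin n → ℂ),
      aeval (((h : E)) v) q = aeval v q := by
    intro h v
    rw [haeval, haeval, hevalq, hevalq]
    refine Fintype.prod_equiv (Equiv.mulRight h)
      (fun g => ∑ k, ((g : E)) (((h : E)) v) k * c k)
      (fun g => ∑ k, ((g : E)) v k * c k) fun g => ?_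
    refine Finset.sum_congr rfl fun k _ => by congr 1
  -- q vanishes at 0 but not at u
  have hq0 : eval (0 : Fin n → ℂ) q = 0 := by
    rw [hevalq]
    refine Finset.prod_eq_zero (Finset.mem_univ (1 : G)) ?_
    simp
  have hqu : eval u q ≠ 0 := by
    rw [hevalq]
    exact Finset.prod_ne_zero_iff.mpr fun g _ => hc g
  -- q lies in the adjoin of the P i
  have hqadj : q ∈ Algebra.adjoin ℂ (Set.range P) := hgen q hqinv
  -- but aeval u and aeval 0 agree on the adjoin
  have hle : Algebra.adjoin ℂ (Set.range P) ≤
      AlgHom.equalizer (aeval u) (aeval (0 : Fin n → ℂ)) := by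
    apply Algebra.adjoin_le
    rintro x ⟨i, rfl⟩
    show aeval u (P i) = aeval (0 : Fin n → ℂ) (P i)
    rw [haeval, haeval]
    have h0 : (0 : Fin n → ℂ) = (0 : ℂ) • u := by simp
    rw [h0, eval_smul_of_isHomogeneous (hhom i)]
    rcases Nat.eq_zero_or_pos (d i) with hd | hd
    · simp [hd]
    · rw [hvan i hd, zero_pow (by omega)]
      ring
  have := hle hqadj
  rw [AlgHom.mem_equalizer, haeval, haeval, hq0] at this
  exact hqu this

/-- For a finite group `G ⊆ GL(ℂⁿ)` and a system `P 1, …, P m` of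
homogeneous generators of the invariant ring `ℂ[V]^G`, the orbit map
`σ = (P 1, …, P m) : ℂⁿ → ℂ^m` is proper: preimages of compact sets are compact. -/
theorem stmt13 (n m : ℕ)
    (G : Subgroup ((Fin n → ℂ) ≃ₗ[ℂ] (Fin n → ℂ))) [Finite G]
    (P : Fin m → MvPolynomial (Fin n) ℂ) (d : Fin m → ℕ)
    (hhom : ∀ i, (P i).IsHomogeneous (d i))
    (hinv : ∀ (i : Fin m) (g : G) (v : Fin n → ℂ),
      aeval (((g : (Fin n → ℂ) ≃ₗ[ℂ] (Fin n → ℂ))) v) (P i) = aeval v (P i))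
    (hgen : ∀ f : MvPolynomial (Fin n) ℂ,
      (∀ (g : G) (v : Fin n → ℂ),
        aeval (((g : (Fin n → ℂ) ≃ₗ[ℂ] (Fin n → ℂ))) v) f = aeval v f) →
      f ∈ Algebra.adjoin ℂ (Set.range P)) :
    IsProperMap (fun v : Fin n → ℂ => fun i : Fin m => aeval v (P i)) := by
  classical
  have haeval : ∀ (v : Fin n → ℂ) (p : MvPolynomial (Fin n) ℂ), aeval v p = eval v p := by
    intro v p; rw [← coe_aeval_eq_eval]; rfl
  have hcont : Continuous (fun v : Fin n → ℂ => fun i : Fin m => aeval v (P i)) := by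
    refine continuous_pi fun i => ?_
    simp only [haeval]
    exact MvPolynomial.continuous_eval (P i)
  rcases subsingleton_or_nontrivial (Fin n → ℂ) with hs | hnt
  · have : Finite (Fin n → ℂ) := Finite.of_subsingleton
    have : CompactSpace (Fin n → ℂ) := Finite.compactSpace
    exact hcont.isProperMap
  -- coercivity via the minimum on the unit sphere
  rw [isProperMap_iff_isCompact_preimage]
  refine ⟨hcont, fun K hK => ?_⟩
  rw [Metric.isCompact_iff_isClosed_bounded]
  refine ⟨hK.isClosed.preimage hcont, ?_⟩
  obtain ⟨C, hC⟩ := (Metric.isBounded_iff_subset_closedBall 0).mp hK.isBounded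
  set s : Finset (Fin m) := Finset.univ.filter (fun i => 1 ≤ d i) with hsdef
  set φ : (Fin n → ℂ) → ℝ := fun w => ∑ i ∈ s, ‖eval w (P i)‖ with hφ
  have hφc : Continuous φ :=
    continuous_finset_sum _ fun i _ => (MvPolynomial.continuous_eval (P i)).norm
  have hSc : IsCompact (Metric.sphere (0 : Fin n → ℂ) 1) := isCompact_sphere 0 1
  have hSne : (Metric.sphere (0 : Fin n → ℂ) 1).Nonempty :=
    NormedSpace.sphere_nonempty.mpr zero_le_one
  obtain ⟨u₀, hu₀, hmin'⟩ := hSc.exists_isMinOn hSne hφc.continuousOn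
  have hmin : ∀ w ∈ Metric.sphere (0 : Fin n → ℂ) 1, φ u₀ ≤ φ w := fun w hw => hmin' hw
  have hε : 0 < φ u₀ := by
    rcases (Finset.sum_nonneg fun i _ => norm_nonneg _ : 0 ≤ φ u₀).lt_or_eq with h | h
    · exact h
    · exfalso
      have hvan : ∀ i, 1 ≤ d i → eval u₀ (P i) = 0 := by
        intro i hdi
        have := Finset.sum_eq_zero_iff_of_nonneg (fun i _ => norm_nonneg _) |>.mp h.symm i
          (by simp [hsdef, hdi])
        simpa using this
      have hu₀ne : u₀ ≠ 0 := by
        intro h0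
        rw [mem_sphere_zero_iff_norm, h0] at hu₀
        simp at hu₀
      exact key_no_common_zero G P d hhom hgen u₀ hu₀ne hvan
  set ε := φ u₀ with hεdef
  set R : ℝ := max 1 (m * C / ε) with hR
  refine (Metric.isBounded_closedBall (x := (0 : Fin n → ℂ)) (r := R)).subset ?_
  intro v hv
  simp only [Set.mem_preimage] at hv
  rw [Metric.mem_closedBall, dist_zero_right]
  rcases le_or_gt ‖v‖ 1 with h1 | h1
  · exact h1.trans (le_max_left _ _)
  have hvnorm : (0:ℝ) < ‖v‖ := lt_trans zero_lt_one h1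
  set u : Fin n → ℂ := ‖v‖⁻¹ • v with hu
  have huS : u ∈ Metric.sphere (0 : Fin n → ℂ) 1 := by
    rw [mem_sphere_zero_iff_norm, hu, norm_smul]
    simp [abs_of_pos (inv_pos.mpr hvnorm), inv_mul_cancel₀ hvnorm.ne']
  have hne : ((‖v‖ : ℂ)) ≠ 0 := by exact_mod_cast hvnorm.ne'
  have hvu : v = ((‖v‖ : ℂ)) • u := by
    funext t
    rw [hu]
    simp only [Pi.smul_apply, Complex.real_smul, smul_eq_mul, Complex.ofReal_inv]
    field_simp
  -- lower bound for the sum over s at v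
  have hlow : ‖v‖ * ε ≤ ∑ i ∈ s, ‖eval v (P i)‖ := by
    have : ‖v‖ * ε ≤ ‖v‖ * φ u := by
      exact mul_le_mul_of_nonneg_left (hmin u huS) hvnorm.le
    refine this.trans ?_
    rw [hφ, Finset.mul_sum]
    refine Finset.sum_le_sum fun i hi => ?_
    have hdi : 1 ≤ d i := by
      rw [hsdef] at hi
      simpa using (Finset.mem_filter.mp hi).2
    have : eval v (P i) = (‖v‖ : ℂ) ^ (d i) * eval u (P i) := by
      conv_lhs => rw [hvu]
      exact eval_smul_of_isHomogeneous (hhom i) _ u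
    rw [this, norm_mul, norm_pow]
    have hnc : ‖((‖v‖ : ℂ))‖ = ‖v‖ := by simp
    rw [hnc]
    have : ‖v‖ ≤ ‖v‖ ^ d i := le_self_pow₀ h1.le (by omega)
    nlinarith [norm_nonneg (eval u (P i)), norm_nonneg v]
  -- upper bound from K
  have hup : ∑ i ∈ s, ‖eval v (P i)‖ ≤ m * C := by
    have hb := hC hv
    rw [Metric.mem_closedBall, dist_zero_right] at hb
    have hcard : (s.card : ℝ) ≤ m := by
      exact_mod_cast (Finset.card_filter_le _ _).trans (by simp)
    calc ∑ i ∈ s, ‖eval v (P i)‖ ≤ ∑ i ∈ s, C := by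
          refine Finset.sum_le_sum fun i _ => ?_
          have := norm_le_pi_norm (fun j : Fin m => aeval v (P j)) i
          rw [haeval] at this
          exact this.trans hb
      _ = s.card * C := by rw [Finset.sum_const, nsmul_eq_mul]
      _ ≤ m * C := by
          have hC0 : (0:ℝ) ≤ C := le_trans (norm_nonneg _) hb
          nlinarith
  have : ‖v‖ ≤ m * C / ε := by
    rw [le_div_iff₀ hε]
    exact hlow.trans hup
  exact this.trans (le_max_right _ _)
end
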